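/- Let p ∈ S₊^{n+1}, η ∈ ℝ^{n+2} a unit vector with ⟨η,p⟩ = 0, and t > 0. Define η_t = (η + (t−1)⟨η,p₀⟩p₀)/√(1 + (t²−1)⟨η,p₀⟩²). Then ‖η_t‖ = 1 and ⟨η_t, C_t(p)⟩ = 0, where C_t(p) = m_t(p)/‖m_t(p)‖ and m_t(p) = (p₁,…,p_{n+1},p_{n+2}/t). -/

import Mathlib

open scoped RealInnerProductSpace

/-- For a unit vector `u`, multiplies the `u`-component of `v` by `t`; thus
`m_t p = stretchAlong p₀ (1 / t) p`, and `η_t` is the normalization of `stretchAlong p₀ t η`. -/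
noncomputable def stretchAlong {E : Type*} [NormedAddCommGroup E] [InnerProductSpace ℝ E]
    (u : E) (t : ℝ) (v : E) : E :=
  v + ((t - 1) * ⟪v, u⟫) • u

section stretchAlong

variable {E : Type*} [NormedAddCommGroup E] [InnerProductSpace ℝ E] {u : E}

theorem inner_stretchAlong_stretchAlong (hu : ‖u‖ = 1) (s t : ℝ) (v w : E) :
    ⟪stretchAlong u s v, stretchAlong u t w⟫ = ⟪v, w⟫ + (s * t - 1) * (⟪v, u⟫ * ⟪w, u⟫) := by
  have huu : ⟪u, u⟫ = 1 := by rw [real_inner_self_eq_norm_sq, hu, one_pow]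
  simp only [stretchAlong, inner_add_left, inner_add_right, real_inner_smul_left,
    real_inner_smul_right, real_inner_comm u, huu]
  ring

theorem norm_stretchAlong_sq (hu : ‖u‖ = 1) (t : ℝ) (v : E) :
    ‖stretchAlong u t v‖ ^ 2 = ‖v‖ ^ 2 + (t ^ 2 - 1) * ⟪v, u⟫ ^ 2 := by
  rw [← real_inner_self_eq_norm_sq, ← real_inner_self_eq_norm_sq,
    inner_stretchAlong_stretchAlong hu]
  ring

/-- Stretching by `t` and by `t⁻¹` are mutually adjoint, so they transport orthogonality. -/
theorem inner_stretchAlong_inv (hu : ‖u‖ = 1) {t : ℝ} (ht : t ≠ 0) (v w : E) :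
    ⟪stretchAlong u t v, stretchAlong u t⁻¹ w⟫ = ⟪v, w⟫ := by
  rw [inner_stretchAlong_stretchAlong hu, mul_inv_cancel₀ ht, sub_self, zero_mul, add_zero]

theorem stretchAlong_ne_zero (hu : ‖u‖ = 1) {t : ℝ} (ht : t ≠ 0) {v : E} (hv : v ≠ 0) :
    stretchAlong u t v ≠ 0 := by
  intro h
  have := inner_stretchAlong_inv hu ht v v
  rw [h, inner_zero_left, eq_comm, inner_self_eq_zero] at this
  exact hv this

end stretchAlong

theorem transformed_normal_vector_general
    (n : ℕ) (p₀ p η : EuclideanSpace ℝ (Fin (n + 2)))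
    (hp₀ : ‖p₀‖ = 1)
    (hη : ‖η‖ = 1) (hηp : ⟪η, p⟫ = 0) (t : ℝ) (ht : 0 < t)
    (ηt : EuclideanSpace ℝ (Fin (n + 2)))
    (hηt : ηt = (Real.sqrt (1 + (t ^ 2 - 1) * ⟪η, p₀⟫ ^ 2))⁻¹ •
      (η + ((t - 1) * ⟪η, p₀⟫) • p₀))
    (mtp : EuclideanSpace ℝ (Fin (n + 2)))
    (hmtp : mtp = p + ((1 / t - 1) * ⟪p, p₀⟫) • p₀) :
    ‖ηt‖ = 1 ∧ ⟪ηt, ‖mtp‖⁻¹ • mtp⟫ = 0 := by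
  set w := stretchAlong p₀ t η
  have hmtp' : mtp = stretchAlong p₀ t⁻¹ p := by rw [hmtp, one_div]; rfl
  have hsqrt : Real.sqrt (1 + (t ^ 2 - 1) * ⟪η, p₀⟫ ^ 2) = ‖w‖ := by
    rw [← Real.sqrt_sq (norm_nonneg w), norm_stretchAlong_sq hp₀, hη, one_pow]
  have hηt' : ηt = ‖w‖⁻¹ • w := by rw [hηt, hsqrt]; rfl
  have hw : w ≠ 0 := stretchAlong_ne_zero hp₀ ht.ne' (norm_ne_zero_iff.mp (hη ▸ one_ne_zero))
  refine ⟨hηt' ▸ norm_smul_inv_norm hw, ?_⟩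
  rw [hηt', hmtp', real_inner_smul_left, real_inner_smul_right,
    inner_stretchAlong_inv hp₀ ht.ne', hηp, mul_zero, mul_zero]

/-- If `p` is in the open upper hemisphere, `η` is a unit vector tangent to the sphere at
`p` and `t > 0`, then `η_t = (η + (t−1)⟨η,p₀⟩p₀)/√(1 + (t²−1)⟨η,p₀⟩²)` is a unit vector
and is orthogonal to `C_t(p) = m_t(p)/‖m_t(p)‖`, where `m_t(p) = p + (1/t − 1)⟨p,p₀⟩ p₀`
(division of the last coordinate by `t`). -/
theorem transformed_normal_vector
    (n : ℕ) (p₀ p η : EuclideanSpace ℝ (Fin (n + 2)))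
    (hp₀ : ‖p₀‖ = 1) (hp : ‖p‖ = 1) (hphem : 0 < ⟪p, p₀⟫)
    (hη : ‖η‖ = 1) (hηp : ⟪η, p⟫ = 0) (t : ℝ) (ht : 0 < t)
    (ηt : EuclideanSpace ℝ (Fin (n + 2)))
    (hηt : ηt = (Real.sqrt (1 + (t ^ 2 - 1) * ⟪η, p₀⟫ ^ 2))⁻¹ •
      (η + ((t - 1) * ⟪η, p₀⟫) • p₀))
    (mtp : EuclideanSpace ℝ (Fin (n + 2)))
    (hmtp : mtp = p + ((1 / t - 1) * ⟪p, p₀⟫) • p₀) :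
    ‖ηt‖ = 1 ∧ ⟪ηt, ‖mtp‖⁻¹ • mtp⟫ = 0 :=
  transformed_normal_vector_general n p₀ p η hp₀ hη hηp t ht ηt hηt mtp hmtp
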